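/- For groups H, K with elements h ∈ H, k ∈ K, there is a group isomorphism Λ_{H×K}(h,k) ≅ Λ_H(h) ×_𝕋 Λ_K(k), where Λ_G(g) = (C_G(g) × ℝ)/⟨(g,−1)⟩ and the fiber product is taken over the projections to 𝕋 = ℝ/ℤ. -/

import Mathlib

/-!
The map `[(a, b), t] ↦ ([a, t], [b, t])` is a homomorphism `Λ_{H×K}(h,k) → Λ_H(h) × Λ_K(k)`
landing in the fibre product. It is injective: if both components are trivial then `a = h ^ m`,
`b = k ^ n` and `t = -m = -n`, so `(a, b, t) = (h, k, -1) ^ m`. Its image is the whole fibre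
product: if `π_h [a, s] = π_k [b, t]` then `t = s + n` with `n ∈ ℤ`, and `[b, t] = [b k ^ n, s]`.
-/

section Lambda

variable {G : Type*} [Group G]

lemma mem_centralizer_self (g : G) : g ∈ Subgroup.centralizer ({g} : Set G) := by
  rw [Subgroup.mem_centralizer_iff]
  rintro h rfl
  rfl

/-- The central element `(g, −1)` of `C_G(g) × ℝ`. -/
def lamGen (g : G) : Subgroup.centralizer ({g} : Set G) × Multiplicative ℝ :=
  (⟨g, mem_centralizer_self g⟩, Multiplicative.ofAdd (-1 : ℝ))

lemma lamGen_comm (g : G) (c : Subgroup.centralizer ({g} : Set G) × Multiplicative ℝ) :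
    Commute (lamGen g) c := by
  have h1 : g * (c.1 : G) = (c.1 : G) * g := by
    have := c.1.2
    rw [Subgroup.mem_centralizer_iff] at this
    exact this g rfl
  refine Prod.ext ?_ (mul_comm _ _)
  exact Subtype.ext h1

instance lamNormal (g : G) : (Subgroup.zpowers (lamGen g)).Normal := by
  constructor
  rintro n ⟨m, rfl⟩ c
  refine ⟨m, ?_⟩
  have hc := (lamGen_comm g c).zpow_left m
  rw [← hc.eq, mul_assoc, mul_inv_cancel, mul_one]

/-- The enhanced centralizer `Λ_G(g) = (C_G(g) × ℝ)/⟨(g,−1)⟩`. -/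
def Lam (g : G) :=
  (Subgroup.centralizer ({g} : Set G) × Multiplicative ℝ) ⧸ Subgroup.zpowers (lamGen g)

instance (g : G) : Group (Lam g) :=
  QuotientGroup.Quotient.group _

/-- The homomorphism `ℝ → ℝ/ℤ` (written multiplicatively). -/
noncomputable def circHom : Multiplicative ℝ →* Multiplicative (AddCircle (1 : ℝ)) :=
  AddMonoidHom.toMultiplicative (QuotientAddGroup.mk' (AddSubgroup.zmultiples (1 : ℝ)))

noncomputable def preProj (g : G) :
    (Subgroup.centralizer ({g} : Set G) × Multiplicative ℝ) →*
      Multiplicative (AddCircle (1 : ℝ)) :=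
  circHom.comp (MonoidHom.snd _ _)

lemma preProj_ker (g : G) :
    ∀ x ∈ Subgroup.zpowers (lamGen g), preProj g x = 1 := by
  rintro x ⟨m, rfl⟩
  rw [map_zpow]
  have h1 : preProj g (lamGen g) = 1 := by
    show Multiplicative.ofAdd (((-1 : ℝ) : AddCircle (1 : ℝ))) = 1
    have : ((-1 : ℝ) : AddCircle (1 : ℝ)) = 0 := by
      rw [AddCircle.coe_eq_zero_iff]
      exact ⟨-1, by simp⟩
    rw [this]; rfl
  rw [h1, one_zpow]

/-- The projection `Λ_G(g) → 𝕋 = ℝ/ℤ`, `[h,t] ↦ t`. -/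
noncomputable def lamProj (g : G) : Lam g →* Multiplicative (AddCircle (1 : ℝ)) :=
  QuotientGroup.lift _ (preProj g) (preProj_ker g)

end Lambda

/-- The fiber product `Λ_H(h) ×_𝕋 Λ_K(k)` over the projections to `𝕋 = ℝ/ℤ`. -/
noncomputable def fiberProd {H K : Type*} [Group H] [Group K] (h : H) (k : K) :
    Subgroup (Lam h × Lam k) where
  carrier := {p | lamProj h p.1 = lamProj k p.2}
  one_mem' := by simp
  mul_mem' := by
    intro p q hp hq
    simp only [Set.mem_setOf_eq, Prod.fst_mul, Prod.snd_mul, map_mul] at *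
    rw [hp, hq]
  inv_mem' := by
    intro p hp
    simp only [Set.mem_setOf_eq, Prod.fst_inv, Prod.snd_inv, map_inv] at *
    rw [hp]

open Subgroup

theorem Prod.mk_mem_centralizer_singleton_iff {H K : Type*} [Group H] [Group K] {h a : H}
    {k b : K} :
    (a, b) ∈ centralizer ({(h, k)} : Set (H × K)) ↔
      a ∈ centralizer {h} ∧ b ∈ centralizer {k} := by
  simp only [mem_centralizer_singleton_iff, Prod.mk_mul_mk, Prod.ext_iff]

def MonoidHom.centralizerMap {G G' : Type*} [Group G] [Group G'] (φ : G →* G') (g : G) :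
    centralizer {g} →* centralizer {φ g} :=
  (φ.comp (centralizer {g}).subtype).codRestrict _ fun c => by
    rw [MonoidHom.comp_apply, mem_centralizer_singleton_iff, ← map_mul, ← map_mul]
    exact congrArg φ (mem_centralizer_singleton_iff.1 c.2)

namespace Lam

variable {G G' : Type*} [Group G] [Group G']

noncomputable def map (φ : G →* G') (g : G) : Lam g →* Lam (φ g) :=
  QuotientGroup.map _ _ ((φ.centralizerMap g).prodMap (MonoidHom.id _))
    (zpowers_le.2 (mem_zpowers _))

theorem lamProj_map (φ : G →* G') (g : G) (x : Lam g) :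
    lamProj (φ g) (map φ g x) = lamProj g x := by
  induction x using QuotientGroup.induction_on with
  | H x => rfl

theorem mk_eq_one_iff {g : G} {c : centralizer {g}} {t : Multiplicative ℝ} :
    (QuotientGroup.mk (c, t) : Lam g) = 1 ↔ ∃ m : ℤ, (c : G) = g ^ m ∧ t.toAdd = -m := by
  rw [QuotientGroup.eq_one_iff, mem_zpowers_iff]
  simp only [Prod.ext_iff, Subtype.ext_iff]
  refine exists_congr fun m => and_congr eq_comm ?_
  rw [← Multiplicative.toAdd.injective.eq_iff]
  simp [lamGen, eq_comm]

theorem mk_mul_zpow {g : G} (c : centralizer {g}) (t : Multiplicative ℝ) (n : ℤ) :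
    (QuotientGroup.mk (c * ⟨g, mem_centralizer_self g⟩ ^ n, t) : Lam g) =
      QuotientGroup.mk (c, t * .ofAdd (n : ℝ)) := by
  rw [QuotientGroup.eq]
  refine ⟨-n, ?_⟩
  ext <;> simp [lamGen]

section Product

variable {H K : Type*} [Group H] [Group K] (h : H) (k : K)

noncomputable def toProd : Lam ((h, k) : H × K) →* Lam h × Lam k :=
  (map (MonoidHom.fst H K) (h, k)).prod (map (MonoidHom.snd H K) (h, k))

theorem toProd_injective : Function.Injective (toProd h k) := by
  refine (injective_iff_map_eq_one _).2 fun x hx => ?_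
  induction x using QuotientGroup.induction_on with
  | H x =>
    obtain ⟨c, t⟩ := x
    obtain ⟨⟨m, hcm, htm⟩, ⟨n, hcn, htn⟩⟩ :=
      (Prod.ext_iff.1 hx).imp mk_eq_one_iff.1 mk_eq_one_iff.1
    obtain rfl : m = n := by exact_mod_cast neg_inj.1 (htm.symm.trans htn)
    exact mk_eq_one_iff.2 ⟨m, Prod.ext hcm hcn, htm⟩

theorem range_toProd : (toProd h k).range = fiberProd h k := by
  refine le_antisymm ?_ fun ⟨x, y⟩ hxy => ?_
  · rintro _ ⟨x, rfl⟩
    exact (lamProj_map _ _ x).trans (lamProj_map _ _ x).symm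
  · obtain ⟨⟨a, s⟩, rfl⟩ := QuotientGroup.mk_surjective x
    obtain ⟨⟨b, t⟩, rfl⟩ := QuotientGroup.mk_surjective y
    obtain ⟨n, hn⟩ : ∃ n : ℤ, t = s * .ofAdd (n : ℝ) := by
      have hst : ((t.toAdd - s.toAdd : ℝ) : AddCircle (1 : ℝ)) = 0 := by
        rw [AddCircle.coe_sub, sub_eq_zero]
        exact hxy.symm
      obtain ⟨n, hn⟩ := (AddCircle.coe_eq_zero_iff 1).1 hst
      refine ⟨n, Multiplicative.toAdd.injective ?_⟩
      simp only [zsmul_one] at hn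
      simp only [toAdd_mul, toAdd_ofAdd, hn, add_sub_cancel]
    let b' := b * ⟨k, mem_centralizer_self k⟩ ^ n
    have hab : (a.1, b'.1) ∈ centralizer {(h, k)} :=
      Prod.mk_mem_centralizer_singleton_iff.2 ⟨a.2, b'.2⟩
    refine ⟨QuotientGroup.mk (⟨_, hab⟩, s), ?_⟩
    exact Prod.ext rfl ((mk_mul_zpow b s n).trans (by rw [hn]))

end Product

end Lam

/-- For `h ∈ H`, `k ∈ K`, there is a group isomorphism
`Λ_{H×K}(h,k) ≅ Λ_H(h) ×_𝕋 Λ_K(k)`. -/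
theorem stmt_15 {H K : Type*} [Group H] [Group K] (h : H) (k : K) :
    Nonempty (Lam ((h, k) : H × K) ≃* fiberProd h k) :=
  ⟨(MonoidHom.ofInjective (Lam.toProd_injective h k)).trans
    (MulEquiv.subgroupCongr (Lam.range_toProd h k))⟩
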